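/- The joint measurability region is downward monotone: if λM₁ + (1−λ)T₁ and μM₂ + (1−μ)T₂ are jointly measurable for some trivial observables T₁, T₂, and 0 ≤ λ' ≤ λ, 0 ≤ μ' ≤ μ, then there exist trivial observables T₁', T₂' such that λ'M₁ + (1−λ')T₁' and μ'M₂ + (1−μ')T₂' are jointly measurable. -/

import Mathlib

open scoped ComplexOrder
/-- A POVM with countable outcome set `J` on the Hilbert space `ℂ^n`,
represented by matrices: each effect is positive semidefinite and they sum to the identity. -/
def IsPOVM {n : ℕ} {J : Type} [Countable J] (M : J → Matrix (Fin n) (Fin n) ℂ) : Prop :=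
  (∀ j, (M j).PosSemidef) ∧ ∑' j, M j = 1

/-- A probability distribution on a countable set. -/
def IsProbDist {J : Type} [Countable J] (p : J → ℝ) : Prop :=
  (∀ j, 0 ≤ p j) ∧ ∑' j, p j = 1

/-- A trivial POVM: each effect is a scalar multiple of the identity,
given by a probability distribution. -/
def IsTrivialPOVM {n : ℕ} {J : Type} [Countable J] (T : J → Matrix (Fin n) (Fin n) ℂ) : Prop :=
  ∃ p : J → ℝ, IsProbDist p ∧ ∀ j, T j = ((p j : ℝ) : ℂ) • 1

/-- Joint measurability: existence of a joint POVM with the two given POVMs as marginals. -/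
def JointlyMeasurable {n : ℕ} {J K : Type} [Countable J] [Countable K]
    (M₁ : J → Matrix (Fin n) (Fin n) ℂ) (M₂ : K → Matrix (Fin n) (Fin n) ℂ) : Prop :=
  ∃ G : J × K → Matrix (Fin n) (Fin n) ℂ, IsPOVM G ∧
    (∀ j, ∑' k, G (j, k) = M₁ j) ∧ (∀ k, ∑' j, G (j, k) = M₂ k)

/-- The mixture `l • M + (1 - l) • T`, effectwise. -/
def mix {n : ℕ} {J : Type} [Countable J] (l : ℝ)
    (M T : J → Matrix (Fin n) (Fin n) ℂ) : J → Matrix (Fin n) (Fin n) ℂ :=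
  fun j => ((l : ℝ) : ℂ) • M j + (((1 - l : ℝ)) : ℂ) • T j

/-- The joint measurability region `J(M₁,M₂)`: the set of `(λ,μ) ∈ [0,1]²` for which
some trivial observables `T₁, T₂` make `λM₁+(1−λ)T₁` and `μM₂+(1−μ)T₂` jointly measurable. -/
def JRegion {n : ℕ} {J K : Type} [Countable J] [Countable K]
    (M₁ : J → Matrix (Fin n) (Fin n) ℂ) (M₂ : K → Matrix (Fin n) (Fin n) ℂ) :
    Set (ℝ × ℝ) :=
  {x | x.1 ∈ Set.Icc (0 : ℝ) 1 ∧ x.2 ∈ Set.Icc (0 : ℝ) 1 ∧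
    ∃ (T₁ : J → Matrix (Fin n) (Fin n) ℂ) (T₂ : K → Matrix (Fin n) (Fin n) ℂ),
      IsTrivialPOVM T₁ ∧ IsTrivialPOVM T₂ ∧
        JointlyMeasurable (mix x.1 M₁ T₁) (mix x.2 M₂ T₂)}

/-! Mixing is transitive: `l'M + (1 - l')T = q(lM + (1 - l)T) + (1 - q)T` with `q = l'/l`, so it
suffices to lower one parameter at a time, i.e. to mix the first observable of a jointly measurable
pair `(A, B)` with a trivial observable `T`. Joint measurability with a fixed `B` is convex in the
first observable (mix the joint POVMs), and `T = p(·) • 1` is jointly measurable with every POVM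
`B`, via the joint effects `p(j) • B(k)`. -/

lemma summable_of_tsum_eq_one {ι R : Type*} [Semiring R] [TopologicalSpace R] {f : ι → R}
    (h : ∑' i, f i = 1) : Summable f := by
  by_contra hf
  rw [tsum_eq_zero_of_not_summable hf] at h
  exact hf (by simp [funext fun i => eq_zero_of_zero_eq_one h (f i)])

lemma summable_smul_of_summable_norm {ι κ 𝕜 E : Type*} [NormedField 𝕜] [NormedAddCommGroup E]
    [NormedSpace 𝕜 E] [CompleteSpace E] {f : ι → 𝕜} {g : κ → E}
    (hf : Summable fun i => ‖f i‖) (hg : Summable fun k => ‖g k‖) :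
    Summable fun x : ι × κ => f x.1 • g x.2 :=
  .of_norm <| by
    simpa only [norm_smul] using hf.mul_of_nonneg hg (fun _ => norm_nonneg _) fun _ => norm_nonneg _

section

variable {n : ℕ} {J K : Type} [Countable J] [Countable K]

lemma IsPOVM.summable {M : J → Matrix (Fin n) (Fin n) ℂ} (hM : IsPOVM M) : Summable M :=
  summable_of_tsum_eq_one hM.2

lemma IsProbDist.hasSum {p : J → ℝ} (hp : IsProbDist p) : HasSum p 1 :=
  hp.2 ▸ (summable_of_tsum_eq_one hp.2).hasSum

lemma IsTrivialPOVM.isPOVM {T : J → Matrix (Fin n) (Fin n) ℂ} (hT : IsTrivialPOVM T) :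
    IsPOVM T := by
  obtain ⟨p, hp, hTp⟩ := hT
  obtain rfl : T = fun j => ((p j : ℝ) : ℂ) • 1 := funext hTp
  refine ⟨fun j => Matrix.PosSemidef.one.smul (Complex.zero_le_real.2 (hp.1 j)), ?_⟩
  rw [((Complex.hasSum_ofReal.2 hp.hasSum).smul_const 1).tsum_eq]
  simp

lemma ofReal_add_ofReal_one_sub (l : ℝ) : ((l : ℝ) : ℂ) + ((1 - l : ℝ) : ℂ) = 1 := by
  push_cast; ring

lemma HasSum.mix {M T : J → Matrix (Fin n) (Fin n) ℂ} {a b : Matrix (Fin n) (Fin n) ℂ}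
    (hM : HasSum M a) (hT : HasSum T b) (l : ℝ) :
    HasSum (mix l M T) (((l : ℝ) : ℂ) • a + ((1 - l : ℝ) : ℂ) • b) :=
  (hM.const_smul _).add (hT.const_smul _)

lemma IsPOVM.mix {M T : J → Matrix (Fin n) (Fin n) ℂ} (hM : IsPOVM M) (hT : IsPOVM T) {l : ℝ}
    (hl₀ : 0 ≤ l) (hl₁ : l ≤ 1) : IsPOVM (mix l M T) := by
  refine ⟨fun j => ((hM.1 j).smul (Complex.zero_le_real.2 hl₀)).add
    ((hT.1 j).smul (Complex.zero_le_real.2 (sub_nonneg.2 hl₁))), ?_⟩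
  rw [(hM.summable.hasSum.mix hT.summable.hasSum l).tsum_eq, hM.2, hT.2,
    Convex.combo_self (ofReal_add_ofReal_one_sub l)]

lemma mix_mix_self (a b : ℝ) (M T : J → Matrix (Fin n) (Fin n) ℂ) :
    mix a (mix b M T) T = mix (a * b) M T := by
  funext j
  simp only [mix]
  push_cast
  module

lemma JointlyMeasurable.symm {A : J → Matrix (Fin n) (Fin n) ℂ} {B : K → Matrix (Fin n) (Fin n) ℂ}
    (h : JointlyMeasurable A B) : JointlyMeasurable B A := by
  obtain ⟨G, ⟨hG, hG1⟩, hA, hB⟩ := h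
  exact ⟨fun x => G x.swap, ⟨fun x => hG _, (Equiv.prodComm K J).tsum_eq G ▸ hG1⟩, hB, hA⟩

section

attribute [local instance] Matrix.normedAddCommGroup Matrix.normedSpace

lemma IsTrivialPOVM.jointlyMeasurable {T : J → Matrix (Fin n) (Fin n) ℂ}
    {B : K → Matrix (Fin n) (Fin n) ℂ} (hT : IsTrivialPOVM T) (hB : IsPOVM B) :
    JointlyMeasurable T B := by
  obtain ⟨p, hp, hTp⟩ := hT
  have hpℂ : HasSum (fun j => ((p j : ℝ) : ℂ)) 1 := Complex.hasSum_ofReal.2 hp.hasSum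
  have hB1 : HasSum B 1 := hB.2 ▸ hB.summable.hasSum
  have hpB := summable_smul_of_summable_norm hpℂ.summable.norm hB.summable.norm
  refine ⟨fun x => ((p x.1 : ℝ) : ℂ) • B x.2,
    ⟨fun x => (hB.1 x.2).smul (Complex.zero_le_real.2 (hp.1 x.1)), ?_⟩, fun j => ?_, fun k => ?_⟩
  · simpa using (hpℂ.smul hB1 hpB).tsum_eq
  · exact (hB1.const_smul _).tsum_eq.trans (hTp j).symm
  · simpa using (hpℂ.smul_const (B k)).tsum_eq

end

lemma JointlyMeasurable.mix_left {A T : J → Matrix (Fin n) (Fin n) ℂ}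
    {B : K → Matrix (Fin n) (Fin n) ℂ} (hA : JointlyMeasurable A B) (hT : JointlyMeasurable T B)
    {l : ℝ} (hl₀ : 0 ≤ l) (hl₁ : l ≤ 1) : JointlyMeasurable (mix l A T) B := by
  obtain ⟨G, hG, hGA, hGB⟩ := hA
  obtain ⟨H, hH, hHT, hHB⟩ := hT
  refine ⟨mix l G H, hG.mix hH hl₀ hl₁, fun j => ?_, fun k => ?_⟩
  · exact (((hG.summable.prod_factor j).hasSum_iff.2 (hGA j)).mix
      ((hH.summable.prod_factor j).hasSum_iff.2 (hHT j)) l).tsum_eq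
  · exact (((hG.summable.prod_symm.prod_factor k).hasSum_iff.2 (hGB k)).mix
      ((hH.summable.prod_symm.prod_factor k).hasSum_iff.2 (hHB k)) l).tsum_eq.trans
      (Convex.combo_self (ofReal_add_ofReal_one_sub l) _)

lemma JointlyMeasurable.mix_left_of_le {A T : J → Matrix (Fin n) (Fin n) ℂ}
    {B : K → Matrix (Fin n) (Fin n) ℂ} {l l' : ℝ} (h : JointlyMeasurable (mix l A T) B)
    (hT : IsTrivialPOVM T) (hB : IsPOVM B) (hl' : 0 ≤ l') (hl'l : l' ≤ l) :
    JointlyMeasurable (mix l' A T) B := by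
  have hl : 0 ≤ l := hl'.trans hl'l
  have hmix : mix (l' / l) (mix l A T) T = mix l' A T := by
    rw [mix_mix_self, div_mul_cancel_of_imp fun hl0 => le_antisymm (hl0 ▸ hl'l) hl']
  exact hmix ▸ h.mix_left (hT.jointlyMeasurable hB) (div_nonneg hl' hl) (div_le_one_of_le₀ hl'l hl)

end

/-- The joint measurability region is downward monotone. -/
theorem jRegion_downward_monotone {n : ℕ} {J K : Type} [Countable J] [Countable K]
    (M₁ : J → Matrix (Fin n) (Fin n) ℂ) (M₂ : K → Matrix (Fin n) (Fin n) ℂ)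
    (hM₁ : IsPOVM M₁) (hM₂ : IsPOVM M₂)
    (l m l' m' : ℝ) (hl1 : l ≤ 1) (hm1 : m ≤ 1)
    (hl' : 0 ≤ l') (hl'l : l' ≤ l) (hm' : 0 ≤ m') (hm'm : m' ≤ m)
    (T₁ : J → Matrix (Fin n) (Fin n) ℂ) (T₂ : K → Matrix (Fin n) (Fin n) ℂ)
    (hT₁ : IsTrivialPOVM T₁) (hT₂ : IsTrivialPOVM T₂)
    (hJM : JointlyMeasurable (mix l M₁ T₁) (mix m M₂ T₂)) :
    ∃ (T₁' : J → Matrix (Fin n) (Fin n) ℂ) (T₂' : K → Matrix (Fin n) (Fin n) ℂ),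
      IsTrivialPOVM T₁' ∧ IsTrivialPOVM T₂' ∧
        JointlyMeasurable (mix l' M₁ T₁') (mix m' M₂ T₂') := by
  have hB : IsPOVM (mix m M₂ T₂) := hM₂.mix hT₂.isPOVM (hm'.trans hm'm) hm1
  have hA' : IsPOVM (mix l' M₁ T₁) := hM₁.mix hT₁.isPOVM hl' (hl'l.trans hl1)
  have h₁ : JointlyMeasurable (mix l' M₁ T₁) (mix m M₂ T₂) :=
    hJM.mix_left_of_le hT₁ hB hl' hl'l
  have h₂ : JointlyMeasurable (mix m' M₂ T₂) (mix l' M₁ T₁) :=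
    h₁.symm.mix_left_of_le hT₂ hA' hm' hm'm
  exact ⟨T₁, T₂, hT₁, hT₂, h₂.symm⟩
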